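/- arXiv:2001.05907 — 2 statements merged into one kernel-verified Lean document; each statement's English description precedes it below -/
import Mathlib

section
/- For every t ≥ 1 and n = 2^t, RBW_n is a finite-index subgroup of BW_n and the quotient group BW_n / RBW_n has order 2^{n/2}. -/
open Matrix

noncomputable section

/-- `Rmat n` is the `n × n` matrix `I_{n/2} ⊗ R(2)`, block diagonal with
`2 × 2` blocks `[[1, 1], [1, -1]]`, acting on row vectors on the right. -/
def Rmat (n : ℕ) : Matrix (Fin n) (Fin n) ℝ :=
  Matrix.of fun i j =>
    if (i : ℕ) / 2 = (j : ℕ) / 2 then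
      if (i : ℕ) % 2 = 1 ∧ (j : ℕ) % 2 = 1 then -1 else 1
    else 0

/-- Concatenation `(u, v)` of two `2^t`-dimensional vectors into a
`2^(t+1)`-dimensional vector. -/
def concat {t : ℕ} (u v : Fin (2 ^ t) → ℝ) : Fin (2 ^ (t + 1)) → ℝ := fun i =>
  if h : (i : ℕ) < 2 ^ t then u ⟨i, h⟩
  else v ⟨(i : ℕ) - 2 ^ t, by
    have hi := i.isLt
    have h2 : 2 ^ (t + 1) = 2 ^ t + 2 ^ t := by rw [pow_succ]; ring
    omega⟩

/-- The Barnes–Wall lattices `BW_{2^t} ⊆ ℝ^{2^t}`, defined recursively by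
`BW_2 = ℤ²` and `BW_{2n} = {(u, u + v) : u ∈ BW_n, v ∈ BW_n · R(n)}`. -/
def BW : ∀ t : ℕ, Set (Fin (2 ^ t) → ℝ)
  | 0 => {x | ∀ i, ∃ z : ℤ, x i = (z : ℝ)}
  | (t + 1) =>
    {x | ∃ u v : Fin (2 ^ t) → ℝ, u ∈ BW t ∧
      (∃ w ∈ BW t, v = Matrix.vecMul w (Rmat (2 ^ t))) ∧ x = concat u (u + v)}

/-- `RBW_n = {x · R(n) : x ∈ BW_n}`. -/
def RBW (t : ℕ) : Set (Fin (2 ^ t) → ℝ) :=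
  (fun x => Matrix.vecMul x (Rmat (2 ^ t))) '' BW t

/-- Squared Euclidean norm. -/
def sqnorm {m : ℕ} (x : Fin m → ℝ) : ℝ := ∑ i, x i ^ 2

/-- `minDist Λ` is the minimum of `‖x‖²` over nonzero `x ∈ Λ`. -/
def minDist {m : ℕ} (Λ : Set (Fin m → ℝ)) : ℝ :=
  sInf (sqnorm '' {x ∈ Λ | x ≠ 0})

/-!
The map `(u, w) ↦ (u, u + w R(n))` carries `BW_n × BW_n` onto `BW_{2n}`. For even `n` it is
injective, since `R(n)² = 2`, and it intertwines `R(n)` acting on both factors with `R(2n)`,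
which is block diagonal; so it also carries `RBW_n × RBW_n` onto `RBW_{2n}`, and
`[BW_{2n} : RBW_{2n}] = [BW_n : RBW_n]²`. The induction starts from `[ℤ² : ℤ² R(2)] = 2`,
`ℤ² R(2)` being the vectors of `ℤ²` with even coordinate sum.
-/

theorem AddSubgroup.relIndex_prod {A B : Type*} [AddGroup A] [AddGroup B]
    (H K : AddSubgroup A) (H' K' : AddSubgroup B) :
    (H.prod H').relIndex (K.prod K') = H.relIndex K * H'.relIndex K' := by
  have hrange : (K.subtype.prodMap K'.subtype).range = K.prod K' := by
    rw [AddMonoidHom.range_prodMap, K.range_subtype, K'.range_subtype]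
  rw [← hrange, ← AddSubgroup.index_comap, AddMonoidHom.prodMap_comap_prod,
    AddSubgroup.index_prod]
  rfl

lemma vecMul_Rmat_apply {n : ℕ} (hn : 2 ∣ n) (x : Fin n → ℝ) (j : Fin n) :
    (x ᵥ* Rmat n) j = x ⟨2 * (j / 2), by omega⟩
      + (if (j : ℕ) % 2 = 1 then -1 else 1) * x ⟨2 * (j / 2) + 1, by omega⟩ := by
  rw [vecMul, dotProduct, Fintype.sum_eq_add ⟨2 * (j / 2), by omega⟩ ⟨2 * (j / 2) + 1, by omega⟩
    (by simp [Fin.ext_iff])]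
  · simp only [Rmat, of_apply]
    split_ifs <;> first | omega | ring
  · rintro i ⟨hi, hi'⟩
    simp only [Fin.ne_iff_vne] at hi hi'
    simp only [Rmat, of_apply, if_neg (show (i : ℕ) / 2 ≠ j / 2 by omega), mul_zero]

lemma vecMul_Rmat_vecMul_Rmat {n : ℕ} (hn : 2 ∣ n) (x : Fin n → ℝ) :
    x ᵥ* Rmat n ᵥ* Rmat n = (2 : ℝ) • x := by
  funext j
  have h1 : 2 * (j / 2) / 2 = (j : ℕ) / 2 := by omega
  have h2 : (2 * (j / 2) + 1) / 2 = (j : ℕ) / 2 := by omega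
  have h3 : 2 * ((j : ℕ) / 2) % 2 = 0 := by omega
  have h4 : (2 * ((j : ℕ) / 2) + 1) % 2 = 1 := by omega
  rw [vecMul_Rmat_apply hn, vecMul_Rmat_apply hn, vecMul_Rmat_apply hn]
  simp only [h1, h2, h3, h4, Pi.smul_apply, smul_eq_mul, zero_ne_one, if_true, if_false]
  rcases Nat.mod_two_eq_zero_or_one j with h | h
  · conv_rhs => rw [show j = ⟨2 * (j / 2), by omega⟩ from Fin.ext (by simp; omega)]
    simp only [h, zero_ne_one, if_false]
    ring
  · conv_rhs => rw [show j = ⟨2 * (j / 2) + 1, by omega⟩ from Fin.ext (by simp; omega)]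
    simp only [h, if_true]
    ring

lemma vecMul_Rmat_injective {n : ℕ} (hn : 2 ∣ n) :
    Function.Injective fun x : Fin n → ℝ => x ᵥ* Rmat n := by
  intro x y hxy
  have h := congrArg (· ᵥ* Rmat n) hxy
  simp only [vecMul_Rmat_vecMul_Rmat hn] at h
  exact smul_right_injective _ two_ne_zero h

lemma vec2_vecMul_Rmat_two (a b : ℝ) : ![a, b] ᵥ* Rmat 2 = ![a + b, a - b] := by
  funext j
  fin_cases j <;> simp [vecMul_Rmat_apply (dvd_refl 2), sub_eq_add_neg]

lemma concat_add {t : ℕ} (u v u' v' : Fin (2 ^ t) → ℝ) :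
    concat u v + concat u' v' = concat (u + u') (v + v') := by
  funext i
  simp only [concat, Pi.add_apply]
  split_ifs <;> rfl

lemma concat_inj {t : ℕ} {u v u' v' : Fin (2 ^ t) → ℝ} :
    concat u v = concat u' v' ↔ u = u' ∧ v = v' := by
  refine ⟨fun h => ⟨funext fun i => ?_, funext fun i => ?_⟩, fun h => h.1 ▸ h.2 ▸ rfl⟩
  · simpa [concat] using congrFun h ⟨i, by omega⟩
  · simpa [concat] using congrFun h ⟨i + 2 ^ t, by omega⟩

lemma concat_vecMul_Rmat {t : ℕ} (ht : 2 ∣ 2 ^ t) (u v : Fin (2 ^ t) → ℝ) :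
    concat u v ᵥ* Rmat (2 ^ (t + 1)) = concat (u ᵥ* Rmat (2 ^ t)) (v ᵥ* Rmat (2 ^ t)) := by
  funext j
  rw [vecMul_Rmat_apply (dvd_pow_self 2 t.succ_ne_zero)]
  by_cases hj : (j : ℕ) < 2 ^ t
  · have h1 : 2 * ((j : ℕ) / 2) < 2 ^ t := by omega
    have h2 : 2 * ((j : ℕ) / 2) + 1 < 2 ^ t := by omega
    simp only [concat, dif_pos hj, dif_pos h1, dif_pos h2, vecMul_Rmat_apply ht]
  · have h1 : ¬ 2 * ((j : ℕ) / 2) < 2 ^ t := by omega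
    have h2 : ¬ 2 * ((j : ℕ) / 2) + 1 < 2 ^ t := by omega
    have e1 : 2 * ((j : ℕ) / 2) - 2 ^ t = 2 * ((j - 2 ^ t) / 2) := by omega
    have e2 : 2 * ((j : ℕ) / 2) + 1 - 2 ^ t = 2 * ((j - 2 ^ t) / 2) + 1 := by omega
    have e3 : ((j : ℕ) - 2 ^ t) % 2 = j % 2 := by omega
    simp only [concat, dif_neg hj, dif_neg h1, dif_neg h2, vecMul_Rmat_apply ht, e1, e2, e3]

lemma concat_eq_vec2 (u v : Fin (2 ^ 0) → ℝ) : concat u v = ![u 0, v 0] := by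
  funext i
  fin_cases i <;> rfl

/-- Plotkin's `(u | u + v)` construction with `v = w R(2^t)`; by definition `BW (t + 1)` is the
image of `BW t × BW t`. -/
def plotkinMap (t : ℕ) : (Fin (2 ^ t) → ℝ) × (Fin (2 ^ t) → ℝ) →+ (Fin (2 ^ (t + 1)) → ℝ) :=
  AddMonoidHom.mk' (fun p => concat p.1 (p.1 + p.2 ᵥ* Rmat (2 ^ t))) fun p q => by
    rw [concat_add, Prod.fst_add, Prod.snd_add, add_vecMul, add_add_add_comm]

lemma plotkinMap_apply {t : ℕ} (p : (Fin (2 ^ t) → ℝ) × (Fin (2 ^ t) → ℝ)) :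
    plotkinMap t p = concat p.1 (p.1 + p.2 ᵥ* Rmat (2 ^ t)) := rfl

lemma plotkinMap_injective {t : ℕ} (ht : 2 ∣ 2 ^ t) : Function.Injective (plotkinMap t) := by
  rintro ⟨u, w⟩ ⟨u', w'⟩ h
  obtain ⟨rfl, h⟩ := concat_inj.1 h
  dsimp only at h
  rw [vecMul_Rmat_injective ht (add_left_cancel h)]

lemma plotkinMap_vecMul_Rmat {t : ℕ} (ht : 2 ∣ 2 ^ t)
    (p : (Fin (2 ^ t) → ℝ) × (Fin (2 ^ t) → ℝ)) :
    plotkinMap t p ᵥ* Rmat (2 ^ (t + 1)) =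
      plotkinMap t (p.1 ᵥ* Rmat (2 ^ t), p.2 ᵥ* Rmat (2 ^ t)) := by
  rw [plotkinMap_apply, plotkinMap_apply, concat_vecMul_Rmat ht, add_vecMul]

def intLattice (n : ℕ) : AddSubgroup (Fin n → ℝ) :=
  AddSubgroup.pi Set.univ fun _ => (Int.castAddHom ℝ).range

def bwLattice : (t : ℕ) → AddSubgroup (Fin (2 ^ t) → ℝ)
  | 0 => intLattice _
  | t + 1 => ((bwLattice t).prod (bwLattice t)).map (plotkinMap t)

def rbwLattice (t : ℕ) : AddSubgroup (Fin (2 ^ t) → ℝ) :=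
  (bwLattice t).map (Rmat (2 ^ t)).vecMulLinear.toAddMonoidHom

lemma coe_bwLattice : ∀ t, (bwLattice t : Set (Fin (2 ^ t) → ℝ)) = BW t
  | 0 => by
    ext x
    simp only [bwLattice, intLattice, BW, AddSubgroup.coe_pi, Set.mem_pi, Set.mem_univ,
      true_implies, SetLike.mem_coe, AddMonoidHom.mem_range, Int.coe_castAddHom, eq_comm]
    exact Iff.rfl
  | t + 1 => by
    ext x
    simp only [bwLattice, AddSubgroup.coe_map, AddSubgroup.coe_prod, coe_bwLattice t]
    constructor
    · rintro ⟨⟨u, w⟩, ⟨hu, hw⟩, rfl⟩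
      exact ⟨u, _, hu, ⟨w, hw, rfl⟩, rfl⟩
    · rintro ⟨u, _, hu, ⟨w, hw, rfl⟩, rfl⟩
      exact ⟨(u, w), ⟨hu, hw⟩, rfl⟩

lemma coe_rbwLattice (t : ℕ) : (rbwLattice t : Set (Fin (2 ^ t) → ℝ)) = RBW t := by
  rw [rbwLattice, AddSubgroup.coe_map, coe_bwLattice]
  rfl

lemma rbwLattice_succ {t : ℕ} (ht : 2 ∣ 2 ^ t) :
    rbwLattice (t + 1) = ((rbwLattice t).prod (rbwLattice t)).map (plotkinMap t) := by
  apply SetLike.coe_injective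
  simp only [rbwLattice, bwLattice, AddSubgroup.coe_map, AddSubgroup.coe_prod,
    ← Set.prodMap_image_prod, Set.image_image]
  exact Set.image_congr fun p _ => plotkinMap_vecMul_Rmat ht p

lemma mem_bwLattice_one {x : Fin (2 ^ 1) → ℝ} :
    x ∈ bwLattice 1 ↔ ∃ p q : ℤ, x = ![(p : ℝ), q] := by
  rw [← SetLike.mem_coe, coe_bwLattice]
  constructor
  · rintro ⟨u, _, hu, ⟨w, hw, rfl⟩, rfl⟩
    obtain ⟨a, ha⟩ := hu 0
    obtain ⟨b, hb⟩ := hw 0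
    refine ⟨a, a + b, ?_⟩
    simp [concat_eq_vec2, vecMul, dotProduct, Rmat, ha, hb]
  · rintro ⟨p, q, rfl⟩
    refine ⟨fun _ => p, fun _ => q - p, fun _ => ⟨p, rfl⟩,
      ⟨fun _ => q - p, fun _ => ⟨q - p, by push_cast; rfl⟩, ?_⟩, ?_⟩
    · funext i
      simp [vecMul, dotProduct, Rmat]
    · simp [concat_eq_vec2]

lemma vec2_mem_rbwLattice_one_iff (p q : ℤ) :
    ![(p : ℝ), q] ∈ rbwLattice 1 ↔ Even (p + q) := by
  constructor
  · rintro ⟨y, hy, hyp⟩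
    obtain ⟨a, b, rfl⟩ := mem_bwLattice_one.1 hy
    change ![(a : ℝ), b] ᵥ* Rmat 2 = _ at hyp
    rw [vec2_vecMul_Rmat_two] at hyp
    have h0 : (a + b : ℝ) = p := by simpa using congrFun hyp 0
    have h1 : (a - b : ℝ) = q := by simpa using congrFun hyp 1
    exact ⟨a, by exact_mod_cast (by push_cast; linarith : ((p + q : ℤ) : ℝ) = a + a)⟩
  · rintro ⟨r, hr⟩
    refine ⟨![(r : ℝ), (p - r : ℤ)], mem_bwLattice_one.2 ⟨r, p - r, rfl⟩, ?_⟩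
    change _ ᵥ* Rmat 2 = _
    rw [vec2_vecMul_Rmat_two]
    exact vec2_eq (by push_cast; ring) (by push_cast [show q = r + r - p by omega]; ring)

lemma rbwLattice_one_le : rbwLattice 1 ≤ bwLattice 1 := by
  rintro _ ⟨y, hy, rfl⟩
  obtain ⟨a, b, rfl⟩ := mem_bwLattice_one.1 hy
  refine mem_bwLattice_one.2 ⟨a + b, a - b, ?_⟩
  change _ ᵥ* Rmat 2 = _
  rw [vec2_vecMul_Rmat_two]
  push_cast
  rfl

lemma relIndex_rbwLattice_one : (rbwLattice 1).relIndex (bwLattice 1) = 2 := by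
  rw [AddSubgroup.relIndex_eq_two_iff]
  refine ⟨![1, 0], mem_bwLattice_one.2 ⟨1, 0, by simp⟩, fun x hx => ?_⟩
  obtain ⟨p, q, rfl⟩ := mem_bwLattice_one.1 hx
  have : ![(p : ℝ), q] + ![1, 0] = ![((p + 1 : ℤ) : ℝ), q] := by
    rw [vec2_add]
    push_cast
    rw [add_zero]
  rw [this, vec2_mem_rbwLattice_one_iff, vec2_mem_rbwLattice_one_iff, add_right_comm,
    Int.even_add_one, xor_not_left]

lemma two_dvd_two_pow {t : ℕ} (ht : 1 ≤ t) : 2 ∣ 2 ^ t := dvd_pow_self 2 (by omega)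

lemma rbwLattice_le_bwLattice {t : ℕ} (ht : 1 ≤ t) : rbwLattice t ≤ bwLattice t := by
  induction t, ht using Nat.le_induction with
  | base => exact rbwLattice_one_le
  | succ t ht ih =>
    rw [rbwLattice_succ (two_dvd_two_pow ht), bwLattice]
    exact AddSubgroup.map_mono (AddSubgroup.prod_mono ih ih)

lemma relIndex_rbwLattice {t : ℕ} (ht : 1 ≤ t) :
    (rbwLattice t).relIndex (bwLattice t) = 2 ^ (2 ^ t / 2) := by
  induction t, ht using Nat.le_induction with
  | base => exact relIndex_rbwLattice_one
  | succ t ht ih =>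
    have h2 := two_dvd_two_pow ht
    rw [rbwLattice_succ h2, bwLattice,
      AddSubgroup.relIndex_map_map_of_injective _ _ (plotkinMap_injective h2),
      AddSubgroup.relIndex_prod, ih, ← pow_add, pow_succ]
    congr 1
    omega

/-- `RBW_n` is a finite-index subgroup of `BW_n`, and the quotient
group `BW_n / RBW_n` has order `2^{n/2}`. -/
theorem bw_quotient_order :
    ∀ t : ℕ, 1 ≤ t →
      ∃ G H : AddSubgroup (Fin (2 ^ t) → ℝ),
        (G : Set (Fin (2 ^ t) → ℝ)) = BW t ∧
        (H : Set (Fin (2 ^ t) → ℝ)) = RBW t ∧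
        H ≤ G ∧
        (H.addSubgroupOf G).index = 2 ^ (2 ^ t / 2) :=
  fun t ht => ⟨bwLattice t, rbwLattice t, coe_bwLattice t, coe_rbwLattice t,
    rbwLattice_le_bwLattice ht, relIndex_rbwLattice ht⟩

end
end

section
/- Let t ≥ 1, n = 2^t, y = (y₁, y₂) ∈ ℝ^{2n} with y₁, y₂ ∈ ℝⁿ, and suppose x = (x₁, x₂) ∈ BW_{2n} satisfies ‖y − x‖² < d(BW_{2n})/4. Then ‖y₁ − x₁‖² < d(BW_n)/4 or ‖y₂ − x₂‖² < d(BW_n)/4; i.e., at least one half y_i lies within the guaranteed error-correction radius of BW_n around x_i. -/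
open Matrix

noncomputable section

lemma pow_succ_eq (t : ℕ) : 2 ^ (t + 1) = 2 ^ t + 2 ^ t := by rw [pow_succ]; ring

lemma concat_sub {t : ℕ} (a b c d : Fin (2 ^ t) → ℝ) :
    concat a b - concat c d = concat (a - c) (b - d) := by
  funext i
  simp only [Pi.sub_apply, concat]
  split <;> simp

lemma sqnorm_concat {t : ℕ} (a b : Fin (2 ^ t) → ℝ) :
    sqnorm (concat a b) = sqnorm a + sqnorm b := by
  have h : 2 ^ (t + 1) = 2 ^ t + 2 ^ t := pow_succ_eq t
  unfold sqnorm
  rw [Fintype.sum_equiv (finCongr h) _ (fun j => concat a b (finCongr h.symm j) ^ 2)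
    (fun x => by simp), Fin.sum_univ_add]
  congr 1
  · apply Finset.sum_congr rfl
    intro i _
    have : ((finCongr h.symm (Fin.castAdd (2^t) i) : Fin (2^(t+1))) : ℕ) = (i : ℕ) := rfl
    simp [concat, this, i.isLt]
  · apply Finset.sum_congr rfl
    intro i _
    have : ((finCongr h.symm (Fin.natAdd (2^t) i) : Fin (2^(t+1))) : ℕ) = 2^t + (i : ℕ) := rfl
    simp [concat, this]

lemma concat_zero (t : ℕ) : concat (0 : Fin (2 ^ t) → ℝ) 0 = 0 := by
  funext i
  simp only [concat, Pi.zero_apply]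
  split <;> rfl

lemma zero_mem_BW : ∀ t : ℕ, (0 : Fin (2 ^ t) → ℝ) ∈ BW t
  | 0 => fun _ => ⟨0, by simp⟩
  | (t + 1) =>
    ⟨0, 0, zero_mem_BW t, ⟨0, zero_mem_BW t, by simp [Matrix.zero_vecMul]⟩,
      by simp [concat_zero]⟩

lemma double_mem_BW {t : ℕ} {u : Fin (2 ^ t) → ℝ} (hu : u ∈ BW t) :
    concat u u ∈ BW (t + 1) :=
  ⟨u, 0, hu, ⟨0, zero_mem_BW t, by simp [Matrix.zero_vecMul]⟩, by simp⟩

lemma concat_ne_zero {t : ℕ} {u : Fin (2 ^ t) → ℝ} (hne : u ≠ 0) :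
    concat u u ≠ 0 := by
  intro h
  obtain ⟨i, hi⟩ : ∃ i, u i ≠ 0 := by
    by_contra hc; push_neg at hc; exact hne (funext hc)
  have hlt : (i : ℕ) < 2 ^ (t + 1) :=
    lt_of_lt_of_le i.isLt (by rw [pow_succ_eq]; exact Nat.le_add_right _ _)
  have := congrFun h ⟨i, hlt⟩
  simp only [concat, Pi.zero_apply] at this
  rw [dif_pos i.isLt] at this
  simp at this
  exact hi this

lemma bw_exists_nonzero (t : ℕ) : ∃ x ∈ BW t, x ≠ 0 := by
  induction t with
  | zero =>
    refine ⟨fun _ => 1, fun i => ⟨1, by norm_num⟩, ?_⟩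
    intro h
    have := congrFun h ⟨0, by norm_num⟩
    simp at this
  | succ t ih =>
    obtain ⟨u, hu, hne⟩ := ih
    exact ⟨concat u u, double_mem_BW hu, concat_ne_zero hne⟩

lemma sqnorm_mem_nonneg {m : ℕ} {Λ : Set (Fin m → ℝ)} {r : ℝ}
    (hr : r ∈ sqnorm '' {x ∈ Λ | x ≠ 0}) : 0 ≤ r := by
  obtain ⟨x, _, rfl⟩ := hr
  exact Finset.sum_nonneg fun i _ => sq_nonneg _

open Pointwise in
lemma minDist_succ_le (t : ℕ) : minDist (BW (t + 1)) ≤ 2 * minDist (BW t) := by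
  set S := sqnorm '' {x ∈ BW t | x ≠ 0} with hS
  set T := sqnorm '' {x ∈ BW (t + 1) | x ≠ 0} with hT
  have hsub : (2 : ℝ) • S ⊆ T := by
    rintro r ⟨s, ⟨x, ⟨hx, hxne⟩, rfl⟩, rfl⟩
    refine ⟨concat x x, ⟨double_mem_BW hx, concat_ne_zero hxne⟩, ?_⟩
    rw [sqnorm_concat]; simp [smul_eq_mul]; ring
  have hSne : S.Nonempty := by
    obtain ⟨x, hx, hne⟩ := bw_exists_nonzero t
    exact ⟨sqnorm x, x, ⟨hx, hne⟩, rfl⟩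
  have hTbdd : BddBelow T := ⟨0, fun r hr => sqnorm_mem_nonneg hr⟩
  have h1 : sInf T ≤ sInf ((2 : ℝ) • S) :=
    csInf_le_csInf hTbdd (hSne.smul_set) hsub
  have h2 : sInf ((2 : ℝ) • S) = 2 * sInf S := by
    rw [Real.sInf_smul_of_nonneg (by norm_num : (0:ℝ) ≤ 2)]
    simp [smul_eq_mul]
  unfold minDist
  rw [← hS, ← hT]
  linarith

/-- If `x = (x₁,x₂) ∈ BW_{2n}` and `‖y − x‖² < d(BW_{2n})/4`, then
`‖y₁ − x₁‖² < d(BW_n)/4` or `‖y₂ − x₂‖² < d(BW_n)/4`. -/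
theorem bw_one_half_within_radius :
    ∀ t : ℕ, 1 ≤ t → ∀ y₁ y₂ x₁ x₂ : Fin (2 ^ t) → ℝ,
      concat x₁ x₂ ∈ BW (t + 1) →
      sqnorm (concat y₁ y₂ - concat x₁ x₂) < minDist (BW (t + 1)) / 4 →
      sqnorm (y₁ - x₁) < minDist (BW t) / 4 ∨
      sqnorm (y₂ - x₂) < minDist (BW t) / 4 := by
  intro t _ y₁ y₂ x₁ x₂ _ hlt
  rw [concat_sub, sqnorm_concat] at hlt
  have hd := minDist_succ_le t
  by_contra hc
  push_neg at hc
  obtain ⟨h1, h2⟩ := hc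
  linarith
end
end
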